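/- arXiv:1405.0179 — 4 statements merged into one kernel-verified Lean document; each statement's English description precedes it below -/
import Mathlib

section
/- Let A ∈ ℝ^{n×n} have the unique LU factorization A = LU and let ΔA ∈ ℝ^{n×n}. If ‖Y_L‖₂ · ‖Y_U‖₂ · ‖ΔA‖_F < 1/4, then A + ΔA has a unique LU factorization A + ΔA = (L + ΔL)(U + ΔU) with ΔL strictly lower triangular and ΔU upper triangular, and moreover ‖ΔL‖_F ≤ 2‖Y_L‖₂‖ΔA‖_F / (1 + √(1 − 4‖Y_U‖₂‖Y_L‖₂‖ΔA‖_F)) ≤ 2‖Y_L‖₂‖ΔA‖_F. -/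
open Matrix Kronecker

noncomputable section

/-- Frobenius norm of a real matrix. -/
noncomputable def frob {m k : Type*} [Fintype m] [Fintype k] (A : Matrix m k ℝ) : ℝ :=
  Real.sqrt (∑ i, ∑ j, (A i j) ^ 2)

/-- Euclidean norm of a vector. -/
noncomputable def vnorm {m : Type*} [Fintype m] (v : m → ℝ) : ℝ :=
  Real.sqrt (∑ i, (v i) ^ 2)

/-- Spectral norm (ℓ²-operator norm) of a real matrix. -/
noncomputable def spec {m k : Type*} [Fintype m] [Fintype k] [DecidableEq k]
    (A : Matrix m k ℝ) : ℝ :=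
  ‖LinearMap.toContinuousLinearMap (Matrix.toEuclideanLin A)‖

/-- Entrywise absolute value of a matrix. -/
def eabs {m k : Type*} (A : Matrix m k ℝ) : Matrix m k ℝ :=
  Matrix.of fun i j => |A i j|

/-- Column-stacking operator: `vec X` indexed by (column, row). -/
def vec {n : ℕ} (X : Matrix (Fin n) (Fin n) ℝ) : Fin n × Fin n → ℝ :=
  fun p => X p.2 p.1

/-- Upper triangular part of a matrix. -/
def ut {n : ℕ} (X : Matrix (Fin n) (Fin n) ℝ) : Matrix (Fin n) (Fin n) ℝ :=
  Matrix.of fun i j => if i ≤ j then X i j else 0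

/-- Strictly lower triangular part of a matrix. -/
def slt {n : ℕ} (X : Matrix (Fin n) (Fin n) ℝ) : Matrix (Fin n) (Fin n) ℝ :=
  Matrix.of fun i j => if j < i then X i j else 0

/-- Upper triangular part with diagonal halved. -/
def up {n : ℕ} (X : Matrix (Fin n) (Fin n) ℝ) : Matrix (Fin n) (Fin n) ℝ :=
  Matrix.of fun i j => if i = j then X i j / 2 else if i ≤ j then X i j else 0

/-- `M_ut`: diagonal matrix with `vec (ut X) = (Mut n).mulVec (vec X)`. -/
def Mut (n : ℕ) : Matrix (Fin n × Fin n) (Fin n × Fin n) ℝ :=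
  Matrix.diagonal fun p => if p.2 ≤ p.1 then 1 else 0

/-- `M_slt`: diagonal matrix with `vec (slt X) = (Mslt n).mulVec (vec X)`. -/
def Mslt (n : ℕ) : Matrix (Fin n × Fin n) (Fin n × Fin n) ℝ :=
  Matrix.diagonal fun p => if p.1 < p.2 then 1 else 0

/-- `M_up`: diagonal matrix with `vec (up X) = (Mup n).mulVec (vec X)`. -/
def Mup (n : ℕ) : Matrix (Fin n × Fin n) (Fin n × Fin n) ℝ :=
  Matrix.diagonal fun p => if p.2 = p.1 then (1 : ℝ) / 2 else if p.2 < p.1 then 1 else 0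

/-- `M_uvec`: 0–1 row-selection matrix extracting entries on or above the diagonal. -/
def Muvec (n : ℕ) : Matrix {p : Fin n × Fin n // p.2 ≤ p.1} (Fin n × Fin n) ℝ :=
  Matrix.of fun q p => if (q : Fin n × Fin n) = p then 1 else 0

/-- `M_slvec`: 0–1 row-selection matrix extracting entries strictly below the diagonal. -/
def Mslvec (n : ℕ) : Matrix {p : Fin n × Fin n // p.1 < p.2} (Fin n × Fin n) ℝ :=
  Matrix.of fun q p => if (q : Fin n × Fin n) = p then 1 else 0

/-- The vec-permutation matrix `Π_{nn}` with `(vecPerm n).mulVec (vec X) = vec Xᵀ`. -/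
def vecPerm (n : ℕ) : Matrix (Fin n × Fin n) (Fin n × Fin n) ℝ :=
  Matrix.of fun p q => if p.1 = q.2 ∧ p.2 = q.1 then 1 else 0

def IsUnitLowerTri {n : ℕ} (L : Matrix (Fin n) (Fin n) ℝ) : Prop :=
  (∀ i, L i i = 1) ∧ ∀ i j : Fin n, i < j → L i j = 0

def IsLowerTri {n : ℕ} (L : Matrix (Fin n) (Fin n) ℝ) : Prop :=
  ∀ i j : Fin n, i < j → L i j = 0

def IsUpperTri {n : ℕ} (U : Matrix (Fin n) (Fin n) ℝ) : Prop :=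
  ∀ i j : Fin n, j < i → U i j = 0

def IsStrictLowerTri {n : ℕ} (X : Matrix (Fin n) (Fin n) ℝ) : Prop :=
  ∀ i j : Fin n, i ≤ j → X i j = 0

/-- Leading (n−1)×(n−1) principal submatrix. -/
def lead {n : ℕ} (U : Matrix (Fin n) (Fin n) ℝ) : Matrix (Fin (n - 1)) (Fin (n - 1)) ℝ :=
  Matrix.of fun i j => U (Fin.castLE (Nat.sub_le n 1) i) (Fin.castLE (Nat.sub_le n 1) j)

/-- `pad B` is the n×n matrix with B as leading (n−1)×(n−1) block and zeros elsewhere. -/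
def pad {n : ℕ} (B : Matrix (Fin (n - 1)) (Fin (n - 1)) ℝ) : Matrix (Fin n) (Fin n) ℝ :=
  Matrix.of fun i j =>
    if h1 : (i : ℕ) < n - 1 then
      if h2 : (j : ℕ) < n - 1 then B ⟨i, h1⟩ ⟨j, h2⟩ else 0
    else 0

/-- `Y_L = M_slvec (I_n ⊗ L) M_slt (diag(U_{n−1}^{−T}, 0) ⊗ L^{−1})`. -/
noncomputable def YL {n : ℕ} (L U : Matrix (Fin n) (Fin n) ℝ) :
    Matrix {p : Fin n × Fin n // p.1 < p.2} (Fin n × Fin n) ℝ :=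
  Mslvec n * ((1 : Matrix (Fin n) (Fin n) ℝ) ⊗ₖ L) * Mslt n *
    (pad (((lead U)⁻¹)ᵀ) ⊗ₖ L⁻¹)

/-- `Y_U = M_uvec (Uᵀ ⊗ I_n) M_ut (U^{−T} ⊗ L^{−1})`. -/
noncomputable def YU {n : ℕ} (L U : Matrix (Fin n) (Fin n) ℝ) :
    Matrix {p : Fin n × Fin n // p.2 ≤ p.1} (Fin n × Fin n) ℝ :=
  Muvec n * (Uᵀ ⊗ₖ (1 : Matrix (Fin n) (Fin n) ℝ)) * Mut n * ((U⁻¹)ᵀ ⊗ₖ L⁻¹)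

/-- `G_R = M_uvec (Rᵀ ⊗ I_n) M_up [R^{−T} ⊗ I_n + (I_n ⊗ R^{−T}) Π_{nn}]`. -/
noncomputable def GR {n : ℕ} (R : Matrix (Fin n) (Fin n) ℝ) :
    Matrix {p : Fin n × Fin n // p.2 ≤ p.1} (Fin n × Fin n) ℝ :=
  Muvec n * (Rᵀ ⊗ₖ (1 : Matrix (Fin n) (Fin n) ℝ)) * Mup n *
    ((R⁻¹)ᵀ ⊗ₖ (1 : Matrix (Fin n) (Fin n) ℝ) +
      ((1 : Matrix (Fin n) (Fin n) ℝ) ⊗ₖ (R⁻¹)ᵀ) * vecPerm n)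

/-- `H_R = M_uvec (Rᵀ ⊗ I_n) M_up (R^{−T} ⊗ R^{−T})`. -/
noncomputable def HR {n : ℕ} (R : Matrix (Fin n) (Fin n) ℝ) :
    Matrix {p : Fin n × Fin n // p.2 ≤ p.1} (Fin n × Fin n) ℝ :=
  Muvec n * (Rᵀ ⊗ₖ (1 : Matrix (Fin n) (Fin n) ℝ)) * Mup n * ((R⁻¹)ᵀ ⊗ₖ (R⁻¹)ᵀ)

/-!
Write `A + ΔA = (L + ΔL) (U + ΔU)` as `L ΔU + ΔL U = ΔA - ΔL ΔU`. Since `L⁻¹ ΔL` is strictly lower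
and `ΔU U⁻¹` upper triangular, a solution is `ΔL = 𝓛 z`, `ΔU = 𝓤 z` with `z = ΔA - 𝓛 z * 𝓤 z`, where
`𝓛 M = L slt (L⁻¹ M U⁻¹)` and `𝓤 M = ut (L⁻¹ M U⁻¹) U`. In vec form `Y_L` and `Y_U` are `𝓛` and `𝓤`
followed by isometric selections (the zero padding of `U_{n-1}⁻ᵀ` is invisible because the last
column of `slt X` vanishes), so `‖𝓛 M‖_F ≤ λ ‖M‖_F` and `‖𝓤 M‖_F ≤ μ ‖M‖_F` with `λ = ‖Y_L‖₂`,
`μ = ‖Y_U‖₂`. Hence `z ↦ ΔA - 𝓛 z * 𝓤 z` contracts the ball of radius `r`, the smaller root of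
`λ μ r² - r + ‖ΔA‖_F = 0`; its fixed point gives the factorization and `‖ΔL‖_F ≤ λ r`.

Uniqueness is uniqueness of LU factorizations with nonzero leading `n - 1` pivots. Testing `𝓛` and
`𝓤` on rank-one matrices bounds the rows of `L⁻¹` by `μ` and the leading `n - 1` columns of `U⁻¹`
by `λ`, so `|(L⁻¹ z U⁻¹)ⱼⱼ| ≤ λ μ r < 1` and the pivots `(1 + (L⁻¹ z U⁻¹)ⱼⱼ) Uⱼⱼ` do not vanish.
-/

attribute [local instance] Matrix.frobeniusNormedAddCommGroup Matrix.frobeniusNormedRing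
  Matrix.frobeniusNormedSpace

theorem quadratic_smaller_root {a b δ : ℝ} (h : 4 * a * b * δ < 1) :
    δ + a * b * (2 * δ / (1 + √(1 - 4 * a * b * δ))) ^ 2 = 2 * δ / (1 + √(1 - 4 * a * b * δ)) ∧
      2 * a * b * (2 * δ / (1 + √(1 - 4 * a * b * δ))) < 1 := by
  set s := √(1 - 4 * a * b * δ)
  have hs : 0 < s := Real.sqrt_pos.mpr (by linarith)
  have hs2 : s ^ 2 = 1 - 4 * a * b * δ := Real.sq_sqrt (by linarith)
  have hs1 : 1 + s ≠ 0 := by positivity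
  constructor
  · field_simp
    linear_combination δ * hs2
  · rw [mul_div_assoc', div_lt_one (by positivity)]
    nlinarith

section FixedPoint

variable {R : Type*} [NonUnitalNormedRing R]

lemma norm_mul_sub_mul_le (x y x' y' : R) :
    ‖x * y - x' * y'‖ ≤ ‖x‖ * ‖y - y'‖ + ‖x - x'‖ * ‖y'‖ := by
  have : x * y - x' * y' = x * (y - y') + (x - x') * y' := by noncomm_ring
  rw [this]
  exact (norm_add_le _ _).trans (add_le_add (norm_mul_le _ _) (norm_mul_le _ _))

theorem exists_eq_sub_mul_of_bounded [CompleteSpace R] (T₁ T₂ : R →+ R) {c₁ c₂ r : ℝ} (hc₁ : 0 ≤ c₁)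
    (hc₂ : 0 ≤ c₂) (hT₁ : ∀ x, ‖T₁ x‖ ≤ c₁ * ‖x‖) (hT₂ : ∀ x, ‖T₂ x‖ ≤ c₂ * ‖x‖) {a : R}
    (hr : ‖a‖ + c₁ * c₂ * r ^ 2 ≤ r) (hK : 2 * c₁ * c₂ * r < 1) :
    ∃ z, z = a - T₁ z * T₂ z ∧ ‖z‖ ≤ r := by
  set Φ : R → R := fun z => a - T₁ z * T₂ z
  have hr0 : 0 ≤ r := le_trans (by positivity) hr
  have hT₁r : ∀ z ∈ Metric.closedBall (0 : R) r, ‖T₁ z‖ ≤ c₁ * r := fun z hz =>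
    (hT₁ z).trans (mul_le_mul_of_nonneg_left (mem_closedBall_zero_iff.mp hz) hc₁)
  have hT₂r : ∀ z ∈ Metric.closedBall (0 : R) r, ‖T₂ z‖ ≤ c₂ * r := fun z hz =>
    (hT₂ z).trans (mul_le_mul_of_nonneg_left (mem_closedBall_zero_iff.mp hz) hc₂)
  have hmaps : Set.MapsTo Φ (Metric.closedBall 0 r) (Metric.closedBall 0 r) := by
    intro z hz
    rw [mem_closedBall_zero_iff]
    calc ‖a - T₁ z * T₂ z‖ ≤ ‖a‖ + ‖T₁ z‖ * ‖T₂ z‖ :=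
          (norm_sub_le _ _).trans (by grw [norm_mul_le])
      _ ≤ ‖a‖ + c₁ * r * (c₂ * r) := by
          gcongr
          exacts [hT₁r z hz, hT₂r z hz]
      _ ≤ r := by linarith
  have hlip : ∀ z ∈ Metric.closedBall (0 : R) r, ∀ w ∈ Metric.closedBall (0 : R) r,
      ‖Φ z - Φ w‖ ≤ 2 * c₁ * c₂ * r * ‖z - w‖ := by
    intro z hz w hw
    calc ‖Φ z - Φ w‖ = ‖T₁ w * T₂ w - T₁ z * T₂ z‖ := by
          simp only [Φ, sub_sub_sub_cancel_left]
      _ ≤ ‖T₁ w‖ * ‖T₂ w - T₂ z‖ + ‖T₁ w - T₁ z‖ * ‖T₂ z‖ := norm_mul_sub_mul_le _ _ _ _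
      _ ≤ c₁ * r * (c₂ * ‖w - z‖) + c₁ * ‖w - z‖ * (c₂ * r) := by
          rw [← map_sub, ← map_sub]
          gcongr
          exacts [hT₁r w hw, hT₂ _, hT₁ _, hT₂r z hz]
      _ = 2 * c₁ * c₂ * r * ‖z - w‖ := by rw [norm_sub_rev]; ring
  have hcontr : ContractingWith ⟨2 * c₁ * c₂ * r, by positivity⟩
      (hmaps.restrict Φ _ _) := by
    refine ⟨hK, LipschitzWith.of_dist_le_mul fun z w => ?_⟩
    simp only [Subtype.dist_eq, dist_eq_norm, Set.MapsTo.val_restrict_apply]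
    exact hlip z z.2 w w.2
  obtain ⟨z, hz, hfix, -⟩ := hcontr.exists_fixedPoint' Metric.isClosed_closedBall.isComplete hmaps
    (Metric.mem_closedBall_self hr0) (edist_ne_top _ _)
  exact ⟨z, hfix.symm, mem_closedBall_zero_iff.mp hz⟩

end FixedPoint

section Norms

variable {l m k : Type*} [Fintype m] [Fintype k]

lemma vnorm_nonneg (v : m → ℝ) : 0 ≤ vnorm v := Real.sqrt_nonneg _

lemma sq_vnorm (v : m → ℝ) : vnorm v ^ 2 = ∑ i, v i ^ 2 :=
  Real.sq_sqrt (Finset.sum_nonneg fun _ _ => sq_nonneg _)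

lemma frob_nonneg (A : Matrix m k ℝ) : 0 ≤ frob A := Real.sqrt_nonneg _

lemma frob_eq_norm (A : Matrix m k ℝ) : frob A = ‖A‖ := by
  simp only [frob, Matrix.frobenius_norm_def, Real.sqrt_eq_rpow, Real.norm_eq_abs,
    Real.rpow_two, sq_abs]

lemma vnorm_eq_norm (v : m → ℝ) : vnorm v = ‖WithLp.toLp 2 v‖ := by
  simp only [vnorm, EuclideanSpace.norm_eq, Real.norm_eq_abs, sq_abs]

lemma vnorm_mulVec_le [DecidableEq k] (A : Matrix m k ℝ) (v : k → ℝ) :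
    vnorm (A *ᵥ v) ≤ spec A * vnorm v := by
  rw [vnorm_eq_norm, vnorm_eq_norm]
  exact (LinearMap.toContinuousLinearMap (Matrix.toEuclideanLin A)).le_opNorm (WithLp.toLp 2 v)

lemma abs_apply_le_frob (X : Matrix m k ℝ) (i : m) (j : k) : |X i j| ≤ frob X := by
  rw [frob, ← Real.sqrt_sq_eq_abs]
  gcongr
  calc X i j ^ 2 ≤ ∑ j', X i j' ^ 2 :=
        Finset.single_le_sum (fun _ _ => sq_nonneg _) (Finset.mem_univ j)
    _ ≤ ∑ i', ∑ j', X i' j' ^ 2 :=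
        Finset.single_le_sum (f := fun i' => ∑ j', X i' j' ^ 2) (fun _ _ => by positivity)
          (Finset.mem_univ i)

lemma frob_replicateRow (v : m → ℝ) : frob (Matrix.replicateRow Unit v) = vnorm v := by
  simp [frob, vnorm, Matrix.replicateRow]

lemma frob_replicateCol (v : m → ℝ) : frob (Matrix.replicateCol Unit v) = vnorm v := by
  simp [frob, vnorm, Matrix.replicateCol]

lemma abs_mul_mul_apply_le (A : Matrix l m ℝ) (X : Matrix m k ℝ) (B : Matrix k l ℝ) (i j : l) :
    |(A * X * B) i j| ≤ vnorm (A i) * frob X * vnorm (fun c => B c j) := by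
  have : (A * X * B) i j =
      (Matrix.replicateRow Unit (A i) * X * Matrix.replicateCol Unit (fun c => B c j)) () () := by
    simp [Matrix.mul_apply, Matrix.replicateRow, Matrix.replicateCol]
  rw [this, ← frob_replicateRow, ← frob_replicateCol]
  refine (abs_apply_le_frob _ _ _).trans ?_
  simp only [frob_eq_norm]
  exact (Matrix.frobenius_norm_mul _ _).trans
    (mul_le_mul_of_nonneg_right (Matrix.frobenius_norm_mul _ _) (norm_nonneg _))

lemma spec_nonneg [DecidableEq k] (A : Matrix m k ℝ) :
    0 ≤ spec A :=
  norm_nonneg _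

lemma frob_vecMulVec (v : m → ℝ) (w : k → ℝ) :
    frob (Matrix.vecMulVec v w) = vnorm v * vnorm w := by
  simp only [frob, vnorm, Matrix.vecMulVec_apply, mul_pow, ← Finset.mul_sum, ← Finset.sum_mul]
  exact Real.sqrt_mul (Finset.sum_nonneg fun _ _ => sq_nonneg _) _

lemma vnorm_single_one [DecidableEq m] (i : m) :
    vnorm (Pi.single i (1 : ℝ)) = 1 := by
  simp [vnorm, Pi.single_apply, apply_ite (· ^ 2)]

end Norms

section Triangular

variable {n : ℕ}

lemma slt_add_ut (X : Matrix (Fin n) (Fin n) ℝ) : slt X + ut X = X := by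
  ext i j
  simp only [Matrix.add_apply, slt, ut, Matrix.of_apply]
  rcases lt_or_ge j i with h | h
  · simp [h, not_le.mpr h]
  · simp [h, not_lt.mpr h]

lemma slt_add (X Y : Matrix (Fin n) (Fin n) ℝ) : slt (X + Y) = slt X + slt Y := by
  ext i j
  simp only [Matrix.add_apply, slt, Matrix.of_apply]
  split_ifs <;> simp

lemma ut_add (X Y : Matrix (Fin n) (Fin n) ℝ) : ut (X + Y) = ut X + ut Y := by
  ext i j
  simp only [Matrix.add_apply, ut, Matrix.of_apply]
  split_ifs <;> simp

lemma isStrictLowerTri_slt (X : Matrix (Fin n) (Fin n) ℝ) : IsStrictLowerTri (slt X) :=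
  fun i j hij => by simp [slt, hij.not_gt]

lemma isUpperTriangular_ut (X : Matrix (Fin n) (Fin n) ℝ) : (ut X).IsUpperTriangular :=
  fun i j hij => by simp [ut, (show j < i from hij).not_ge]

lemma IsUpperTri.isUpperTriangular {U : Matrix (Fin n) (Fin n) ℝ} (hU : IsUpperTri U) :
    U.IsUpperTriangular :=
  fun i j hij => hU i j hij

lemma IsUnitLowerTri.isLowerTriangular {L : Matrix (Fin n) (Fin n) ℝ} (hL : IsUnitLowerTri L) :
    L.IsLowerTriangular :=
  fun i j hij => hL.2 i j hij

lemma IsStrictLowerTri.mul_left {L X : Matrix (Fin n) (Fin n) ℝ} (hL : L.IsLowerTriangular)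
    (hX : IsStrictLowerTri X) : IsStrictLowerTri (L * X) := by
  intro i j hij
  rw [Matrix.mul_apply]
  refine Finset.sum_eq_zero fun k _ => ?_
  rcases le_or_gt k i with hk | hk
  · rw [hX k j (hk.trans hij), mul_zero]
  · rw [hL (show OrderDual.toDual k < OrderDual.toDual i from hk), zero_mul]

lemma Matrix.BlockTriangular.mul_apply_self {m R α : Type*} [Fintype m]
    [NonUnitalNonAssocSemiring R] [LinearOrder α] {b : m → α} (hb : Function.Injective b)
    {M N : Matrix m m R} (hM : M.BlockTriangular b) (hN : N.BlockTriangular b) (i : m) :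
    (M * N) i i = M i i * N i i := by
  rw [Matrix.mul_apply, Finset.sum_eq_single i (fun k _ hki => ?_) (by simp)]
  rcases lt_or_gt_of_ne (hb.ne hki) with h | h
  · rw [hM h, zero_mul]
  · rw [hN h, mul_zero]

lemma Matrix.BlockTriangular.inv_apply_self_mul {m R α : Type*} [Fintype m] [DecidableEq m]
    [CommRing R] [LinearOrder α] {b : m → α} (hb : Function.Injective b) {M : Matrix m m R}
    (hM : M.BlockTriangular b) (hdet : IsUnit M.det) (i : m) : M⁻¹ i i * M i i = 1 := by
  let _ := M.invertibleOfIsUnitDet hdet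
  rw [← (blockTriangular_inv_of_blockTriangular hM).mul_apply_self hb hM,
    Matrix.nonsing_inv_mul M hdet, Matrix.one_apply_eq]

namespace IsUnitLowerTri

variable {L L' : Matrix (Fin n) (Fin n) ℝ}

lemma isUnit_det (hL : IsUnitLowerTri L) : IsUnit L.det := by
  rw [Matrix.det_of_isLowerTriangular L hL.isLowerTriangular, Finset.prod_eq_one fun i _ => hL.1 i]
  exact isUnit_one

lemma mul (hL : IsUnitLowerTri L) (hL' : IsUnitLowerTri L') : IsUnitLowerTri (L * L') :=
  ⟨fun i => by
    rw [hL.isLowerTriangular.mul_apply_self OrderDual.toDual.injective hL'.isLowerTriangular,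
      hL.1, hL'.1, one_mul],
   fun _ _ hij => hL.isLowerTriangular.mul hL'.isLowerTriangular hij⟩

lemma inv (hL : IsUnitLowerTri L) : IsUnitLowerTri L⁻¹ := by
  let _ := L.invertibleOfIsUnitDet hL.isUnit_det
  have hlow := blockTriangular_inv_of_blockTriangular hL.isLowerTriangular
  refine ⟨fun i => ?_, fun _ _ hij => hlow hij⟩
  simpa [hL.1 i] using hL.isLowerTriangular.inv_apply_self_mul OrderDual.toDual.injective
    hL.isUnit_det i

lemma add_strictLower (hL : IsUnitLowerTri L) {X : Matrix (Fin n) (Fin n) ℝ}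
    (hX : IsStrictLowerTri X) : IsUnitLowerTri (L + X) :=
  ⟨fun i => by simp [hL.1 i, hX i i le_rfl],
   fun i j hij => by simp [hL.2 i j hij, hX i j hij.le]⟩

end IsUnitLowerTri

lemma eq_one_of_unitLower_of_mul_upper {P V : Matrix (Fin n) (Fin n) ℝ} (hP : IsUnitLowerTri P)
    (hV : V.IsUpperTriangular) (hpiv : ∀ j : Fin n, (j : ℕ) + 1 < n → V j j ≠ 0)
    (hPV : (P * V).IsUpperTriangular) : P = 1 := by
  have hcol : ∀ j i : Fin n, j < i → P i j = 0 := by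
    intro j
    induction j using WellFoundedLT.induction with
    | _ j ih =>
      intro i hji
      have hentry : (P * V) i j = P i j * V j j := by
        rw [Matrix.mul_apply, Finset.sum_eq_single j (fun k _ hkj => ?_) (by simp)]
        rcases lt_or_gt_of_ne hkj with hk | hk
        · rw [ih k hk i (hk.trans hji), zero_mul]
        · rw [hV (show id j < id k from hk), mul_zero]
      have hpiv_j : V j j ≠ 0 := hpiv j (by have := i.isLt; have : (j : ℕ) < i := hji; omega)
      exact (mul_eq_zero.mp (hentry ▸ hPV hji)).resolve_right hpiv_j
  ext i j
  rcases lt_trichotomy i j with h | rfl | h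
  · rw [hP.2 i j h, Matrix.one_apply_ne h.ne]
  · rw [hP.1, Matrix.one_apply_eq]
  · rw [hcol j i h, Matrix.one_apply_ne h.ne']

theorem lu_factorization_unique {L₁ L₂ V₁ V₂ : Matrix (Fin n) (Fin n) ℝ}
    (hL₁ : IsUnitLowerTri L₁) (hL₂ : IsUnitLowerTri L₂) (hV₁ : V₁.IsUpperTriangular)
    (hV₂ : V₂.IsUpperTriangular) (hpiv : ∀ j : Fin n, (j : ℕ) + 1 < n → V₁ j j ≠ 0)
    (h : L₁ * V₁ = L₂ * V₂) : L₁ = L₂ ∧ V₁ = V₂ := by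
  have hPV : L₂⁻¹ * L₁ * V₁ = V₂ := by
    rw [Matrix.mul_assoc, h, ← Matrix.mul_assoc, Matrix.nonsing_inv_mul _ hL₂.isUnit_det,
      Matrix.one_mul]
  have hP : L₂⁻¹ * L₁ = 1 :=
    eq_one_of_unitLower_of_mul_upper (hL₂.inv.mul hL₁) hV₁ hpiv (hPV ▸ hV₂)
  rw [hP, Matrix.one_mul] at hPV
  refine ⟨?_, hPV⟩
  calc L₁ = L₂ * (L₂⁻¹ * L₁) := by
        rw [← Matrix.mul_assoc, Matrix.mul_nonsing_inv _ hL₂.isUnit_det, Matrix.one_mul]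
    _ = L₂ := by rw [hP, Matrix.mul_one]

end Triangular

section Vec

variable {n : ℕ}

lemma kronecker_mulVec_vec' (A X B : Matrix (Fin n) (Fin n) ℝ) :
    (B ⊗ₖ A) *ᵥ _root_.vec X = _root_.vec (A * X * Bᵀ) :=
  Matrix.kronecker_mulVec_vec A X B

lemma Mslt_mulVec_vec (X : Matrix (Fin n) (Fin n) ℝ) :
    Mslt n *ᵥ _root_.vec X = _root_.vec (slt X) := by
  ext p
  simp [Mslt, Matrix.mulVec_diagonal, _root_.vec, slt]

lemma Mut_mulVec_vec (X : Matrix (Fin n) (Fin n) ℝ) :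
    Mut n *ᵥ _root_.vec X = _root_.vec (ut X) := by
  ext p
  simp [Mut, Matrix.mulVec_diagonal, _root_.vec, ut]

lemma frob_eq_vnorm_vec (X : Matrix (Fin n) (Fin n) ℝ) : frob X = vnorm (_root_.vec X) := by
  rw [frob, vnorm, Fintype.sum_prod_type, Finset.sum_comm]
  rfl

lemma vnorm_select_mulVec {ι : Type*} [Fintype ι] [DecidableEq ι] {p : ι → Prop}
    [DecidablePred p] {v : ι → ℝ} (hv : ∀ x, ¬ p x → v x = 0) :
    vnorm (Matrix.of (fun (q : {x // p x}) x => if (q : ι) = x then (1 : ℝ) else 0) *ᵥ v) =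
      vnorm v := by
  have happly : ∀ q : {x // p x}, (Matrix.of (fun (q : {x // p x}) x =>
      if (q : ι) = x then (1 : ℝ) else 0) *ᵥ v) q = v q := fun q => by
    simp [Matrix.mulVec, dotProduct]
  simp only [vnorm, happly]
  rw [← Finset.sum_subtype (Finset.univ.filter p) (by simp) (fun x => v x ^ 2),
    Finset.sum_filter_of_ne fun x _ hx => ?_]
  by_contra hpx
  simp [hv x hpx] at hx

lemma vnorm_Mslvec_mulVec_vec {X : Matrix (Fin n) (Fin n) ℝ} (hX : IsStrictLowerTri X) :
    vnorm (Mslvec n *ᵥ _root_.vec X) = frob X := by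
  rw [frob_eq_vnorm_vec]
  exact vnorm_select_mulVec fun p hp => hX p.2 p.1 (not_lt.mp hp)

lemma vnorm_Muvec_mulVec_vec {X : Matrix (Fin n) (Fin n) ℝ} (hX : X.IsUpperTriangular) :
    vnorm (Muvec n *ᵥ _root_.vec X) = frob X := by
  rw [frob_eq_vnorm_vec]
  exact vnorm_select_mulVec fun p hp => hX (not_le.mp hp)

end Vec

section LeadingBlock

variable {n : ℕ}

lemma sum_castLE {m k : ℕ} (h : m ≤ k) {f : Fin k → ℝ} (hf : ∀ i : Fin k, m ≤ i → f i = 0) :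
    ∑ i : Fin m, f (Fin.castLE h i) = ∑ i, f i := by
  refine (Finset.sum_map Finset.univ (Fin.castLEEmb h) f).symm.trans ?_
  refine Finset.sum_subset (Finset.subset_univ _) fun i _ hi => hf i ?_
  by_contra! hlt
  exact hi (Finset.mem_map.mpr ⟨⟨i, hlt⟩, Finset.mem_univ _, rfl⟩)

lemma lead_inv {U : Matrix (Fin n) (Fin n) ℝ} (hU : U.IsUpperTriangular) (hdet : IsUnit U.det) :
    (lead U)⁻¹ = lead U⁻¹ := by
  let _ := U.invertibleOfIsUnitDet hdet
  refine Matrix.inv_eq_right_inv ?_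
  ext i j
  simp only [Matrix.mul_apply, lead, Matrix.of_apply]
  rw [sum_castLE (Nat.sub_le n 1)
    (f := fun k => U (Fin.castLE _ i) k * U⁻¹ k (Fin.castLE _ j)) fun k hk => ?_]
  · rw [← Matrix.mul_apply, Matrix.mul_nonsing_inv U hdet, Matrix.one_apply, Matrix.one_apply]
    simp [Fin.ext_iff]
  · have hjk : Fin.castLE (Nat.sub_le n 1) j < k := by
      rw [Fin.lt_def, Fin.val_castLE]
      omega
    exact mul_eq_zero_of_right _ (blockTriangular_inv_of_blockTriangular hU hjk)

lemma pad_transpose (B : Matrix (Fin (n - 1)) (Fin (n - 1)) ℝ) : (pad B)ᵀ = pad Bᵀ := by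
  ext i j
  simp only [Matrix.transpose_apply, pad, Matrix.of_apply]
  split_ifs <;> rfl

lemma slt_mul_pad_lead {R : Matrix (Fin n) (Fin n) ℝ} (hR : R.IsUpperTriangular)
    (X : Matrix (Fin n) (Fin n) ℝ) : slt (X * pad (lead R)) = slt (X * R) := by
  ext i j
  simp only [slt, Matrix.of_apply]
  split_ifs with hji
  swap; · rfl
  have hj : (j : ℕ) < n - 1 := by
    have := i.isLt
    have : (j : ℕ) < i := hji
    omega
  simp only [Matrix.mul_apply]
  refine Finset.sum_congr rfl fun l _ => congrArg (X i l * ·) ?_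
  by_cases hl : (l : ℕ) < n - 1
  · simp [pad, lead, hl, hj]
  · simp only [pad, Matrix.of_apply, dif_neg hl]
    exact (hR (show j < l by rw [Fin.lt_def]; omega)).symm

end LeadingBlock

section Perturbation

variable {n : ℕ}

def lowerPerturbation (L U : Matrix (Fin n) (Fin n) ℝ) :
    Matrix (Fin n) (Fin n) ℝ →+ Matrix (Fin n) (Fin n) ℝ :=
  AddMonoidHom.mk' (fun M => L * slt (L⁻¹ * M * U⁻¹)) fun M N => by
    simp only [Matrix.mul_add, Matrix.add_mul, slt_add]

def upperPerturbation (L U : Matrix (Fin n) (Fin n) ℝ) :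
    Matrix (Fin n) (Fin n) ℝ →+ Matrix (Fin n) (Fin n) ℝ :=
  AddMonoidHom.mk' (fun M => ut (L⁻¹ * M * U⁻¹) * U) fun M N => by
    simp only [Matrix.mul_add, Matrix.add_mul, ut_add]

variable {L U : Matrix (Fin n) (Fin n) ℝ}

lemma lowerPerturbation_apply (M : Matrix (Fin n) (Fin n) ℝ) :
    lowerPerturbation L U M = L * slt (L⁻¹ * M * U⁻¹) := rfl

lemma upperPerturbation_apply (M : Matrix (Fin n) (Fin n) ℝ) :
    upperPerturbation L U M = ut (L⁻¹ * M * U⁻¹) * U := rfl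

lemma mul_upperPerturbation_add_lowerPerturbation_mul (hL : IsUnit L.det) (hU : IsUnit U.det)
    (M : Matrix (Fin n) (Fin n) ℝ) :
    L * upperPerturbation L U M + lowerPerturbation L U M * U = M := by
  set G := L⁻¹ * M * U⁻¹
  calc L * (ut G * U) + L * slt G * U = L * (slt G + ut G) * U := by noncomm_ring
    _ = L * L⁻¹ * M * (U⁻¹ * U) := by simp only [slt_add_ut, G, Matrix.mul_assoc]
    _ = M := by
      rw [Matrix.mul_nonsing_inv L hL, Matrix.nonsing_inv_mul U hU, Matrix.one_mul, Matrix.mul_one]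

lemma add_eq_mul_of_eq_sub_mul (hL : IsUnit L.det) (hU : IsUnit U.det)
    {ΔA z : Matrix (Fin n) (Fin n) ℝ}
    (hz : z = ΔA - lowerPerturbation L U z * upperPerturbation L U z) :
    L * U + ΔA = (L + lowerPerturbation L U z) * (U + upperPerturbation L U z) := by
  have hsplit := mul_upperPerturbation_add_lowerPerturbation_mul hL hU z
  set X := lowerPerturbation L U z
  set Y := upperPerturbation L U z
  have hΔA : ΔA = L * Y + X * U + X * Y := by rw [hsplit, hz, sub_add_cancel]
  rw [hΔA]
  noncomm_ring

lemma isStrictLowerTri_lowerPerturbation (hL : L.IsLowerTriangular)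
    (M : Matrix (Fin n) (Fin n) ℝ) : IsStrictLowerTri (lowerPerturbation L U M) :=
  (isStrictLowerTri_slt _).mul_left hL

lemma isUpperTriangular_upperPerturbation (hU : U.IsUpperTriangular)
    (M : Matrix (Fin n) (Fin n) ℝ) : (upperPerturbation L U M).IsUpperTriangular :=
  (isUpperTriangular_ut _).mul hU

lemma YL_mulVec_vec (hU : U.IsUpperTriangular) (hdet : IsUnit U.det)
    (M : Matrix (Fin n) (Fin n) ℝ) :
    YL L U *ᵥ _root_.vec M = Mslvec n *ᵥ _root_.vec (lowerPerturbation L U M) := by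
  let _ := U.invertibleOfIsUnitDet hdet
  simp only [YL, ← Matrix.mulVec_mulVec, kronecker_mulVec_vec', Mslt_mulVec_vec, pad_transpose,
    Matrix.transpose_transpose, lead_inv hU hdet,
    slt_mul_pad_lead (blockTriangular_inv_of_blockTriangular hU), Matrix.transpose_one,
    Matrix.mul_one, lowerPerturbation_apply]

lemma YU_mulVec_vec (M : Matrix (Fin n) (Fin n) ℝ) :
    YU L U *ᵥ _root_.vec M = Muvec n *ᵥ _root_.vec (upperPerturbation L U M) := by
  simp only [YU, ← Matrix.mulVec_mulVec, kronecker_mulVec_vec', Mut_mulVec_vec,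
    Matrix.transpose_transpose, Matrix.one_mul, upperPerturbation_apply]

lemma frob_lowerPerturbation_le (hL : L.IsLowerTriangular) (hU : U.IsUpperTriangular)
    (hdet : IsUnit U.det) (M : Matrix (Fin n) (Fin n) ℝ) :
    frob (lowerPerturbation L U M) ≤ spec (YL L U) * frob M := by
  rw [← vnorm_Mslvec_mulVec_vec (isStrictLowerTri_lowerPerturbation hL M),
    ← YL_mulVec_vec hU hdet, frob_eq_vnorm_vec]
  exact vnorm_mulVec_le _ _

lemma frob_upperPerturbation_le (hU : U.IsUpperTriangular) (M : Matrix (Fin n) (Fin n) ℝ) :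
    frob (upperPerturbation L U M) ≤ spec (YU L U) * frob M := by
  rw [← vnorm_Muvec_mulVec_vec (isUpperTriangular_upperPerturbation hU M), ← YU_mulVec_vec,
    frob_eq_vnorm_vec]
  exact vnorm_mulVec_le _ _

theorem exists_eq_sub_lowerPerturbation_mul (hL : IsUnitLowerTri L) (hU : U.IsUpperTriangular)
    (hdet : IsUnit U.det) {ΔA : Matrix (Fin n) (Fin n) ℝ}
    (hcond : spec (YL L U) * spec (YU L U) * frob ΔA < 1 / 4) :
    ∃ z, z = ΔA - lowerPerturbation L U z * upperPerturbation L U z ∧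
      frob z ≤ 2 * frob ΔA / (1 + √(1 - 4 * spec (YU L U) * spec (YL L U) * frob ΔA)) ∧
      spec (YL L U) * spec (YU L U) * frob z < 1 := by
  have hYL := spec_nonneg (YL L U)
  have hYU := spec_nonneg (YU L U)
  obtain ⟨hroot, hK⟩ := quadratic_smaller_root (a := spec (YU L U)) (b := spec (YL L U))
    (δ := frob ΔA) (by linarith)
  obtain ⟨z, hz, hzr⟩ := exists_eq_sub_mul_of_bounded (lowerPerturbation L U)
    (upperPerturbation L U) hYL hYU
    (fun M => by simpa only [frob_eq_norm] using
      frob_lowerPerturbation_le hL.isLowerTriangular hU hdet M)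
    (fun M => by simpa only [frob_eq_norm] using frob_upperPerturbation_le hU M)
    (by rw [← frob_eq_norm]; linarith) (by linarith)
  rw [← frob_eq_norm] at hzr
  exact ⟨z, hz, hzr, by nlinarith [mul_le_mul_of_nonneg_left hzr (mul_nonneg hYL hYU)]⟩

end Perturbation

section Pivots

variable {n : ℕ} {L U : Matrix (Fin n) (Fin n) ℝ}

lemma upperPerturbation_apply_self (hU : U.IsUpperTriangular) (M : Matrix (Fin n) (Fin n) ℝ)
    (i : Fin n) : upperPerturbation L U M i i = (L⁻¹ * M * U⁻¹) i i * U i i := by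
  rw [upperPerturbation_apply,
    (isUpperTriangular_ut _).mul_apply_self Function.injective_id hU]
  simp [ut]

lemma lowerPerturbation_apply_of_val_eq_succ (hL : IsUnitLowerTri L) {a j : Fin n}
    (haj : (a : ℕ) = j + 1) (M : Matrix (Fin n) (Fin n) ℝ) :
    lowerPerturbation L U M a j = (L⁻¹ * M * U⁻¹) a j := by
  rw [lowerPerturbation_apply, Matrix.mul_apply, Finset.sum_eq_single a (fun b _ hba => ?_)
    (by simp)]
  · simp [slt, hL.1 a, show j < a by rw [Fin.lt_def]; omega]
  · rcases lt_or_gt_of_ne hba with h | h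
    · have : ¬ j < b := by rw [Fin.lt_def] at h ⊢; omega
      simp [slt, this]
    · rw [hL.2 a b h, zero_mul]

theorem vnorm_inv_row_le_spec_YU (hU : U.IsUpperTriangular) (hdet : IsUnit U.det) (i : Fin n) :
    vnorm (L⁻¹ i) ≤ spec (YU L U) := by
  set v := L⁻¹ i
  set M := Matrix.vecMulVec v (Pi.single i (1 : ℝ))
  have hentry : upperPerturbation L U M i i = vnorm v ^ 2 := by
    rw [upperPerturbation_apply_self hU, Matrix.mul_vecMulVec, Matrix.vecMulVec_mul,
      Matrix.single_one_vecMul, Matrix.vecMulVec_apply, Matrix.row_apply, mul_assoc,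
      hU.inv_apply_self_mul Function.injective_id hdet i, mul_one, sq_vnorm]
    simp [Matrix.mulVec, dotProduct, v, sq]
  have hsq : vnorm v ^ 2 ≤ spec (YU L U) * vnorm v :=
    calc vnorm v ^ 2 = |upperPerturbation L U M i i| := by rw [hentry, abs_of_nonneg (sq_nonneg _)]
      _ ≤ frob (upperPerturbation L U M) := abs_apply_le_frob _ _ _
      _ ≤ spec (YU L U) * frob M := frob_upperPerturbation_le hU _
      _ = spec (YU L U) * vnorm v := by rw [frob_vecMulVec, vnorm_single_one, mul_one]
  nlinarith [vnorm_nonneg v, spec_nonneg (YU L U)]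

theorem vnorm_inv_col_le_spec_YL (hL : IsUnitLowerTri L) (hU : U.IsUpperTriangular)
    (hdet : IsUnit U.det) {j : Fin n} (hj : (j : ℕ) + 1 < n) :
    vnorm (fun k => U⁻¹ k j) ≤ spec (YL L U) := by
  set w := fun k => U⁻¹ k j
  set a : Fin n := ⟨j + 1, hj⟩
  set M := Matrix.vecMulVec (Pi.single a (1 : ℝ)) w
  have hentry : lowerPerturbation L U M a j = vnorm w ^ 2 := by
    rw [lowerPerturbation_apply_of_val_eq_succ hL rfl, Matrix.mul_vecMulVec, Matrix.vecMulVec_mul,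
      Matrix.mulVec_single_one, Matrix.vecMulVec_apply, sq_vnorm]
    simp [Matrix.vecMul, dotProduct, hL.inv.1 a, w, sq]
  have hsq : vnorm w ^ 2 ≤ spec (YL L U) * vnorm w :=
    calc vnorm w ^ 2 = |lowerPerturbation L U M a j| := by rw [hentry, abs_of_nonneg (sq_nonneg _)]
      _ ≤ frob (lowerPerturbation L U M) := abs_apply_le_frob _ _ _
      _ ≤ spec (YL L U) * frob M := frob_lowerPerturbation_le hL.isLowerTriangular hU hdet _
      _ = spec (YL L U) * vnorm w := by rw [frob_vecMulVec, vnorm_single_one, one_mul]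
  nlinarith [vnorm_nonneg w, spec_nonneg (YL L U)]

theorem upperPerturbation_pivot_ne_zero (hL : IsUnitLowerTri L) (hU : U.IsUpperTriangular)
    (hdet : IsUnit U.det) {z : Matrix (Fin n) (Fin n) ℝ}
    (hz : spec (YL L U) * spec (YU L U) * frob z < 1) {j : Fin n} (hj : (j : ℕ) + 1 < n) :
    (U + upperPerturbation L U z) j j ≠ 0 := by
  have hG : |(L⁻¹ * z * U⁻¹) j j| < 1 :=
    calc |(L⁻¹ * z * U⁻¹) j j| ≤ vnorm (L⁻¹ j) * frob z * vnorm (fun k => U⁻¹ k j) :=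
          abs_mul_mul_apply_le _ _ _ _ _
      _ ≤ spec (YU L U) * frob z * spec (YL L U) := by
          gcongr
          exacts [vnorm_nonneg _, mul_nonneg (spec_nonneg _) (frob_nonneg _), frob_nonneg _,
            vnorm_inv_row_le_spec_YU hU hdet j, vnorm_inv_col_le_spec_YL hL hU hdet hj]
      _ < 1 := by linarith
  have hUjj : U j j ≠ 0 := right_ne_zero_of_mul_eq_one
    (hU.inv_apply_self_mul Function.injective_id hdet j)
  rw [Matrix.add_apply, upperPerturbation_apply_self hU, ← one_add_mul]
  exact mul_ne_zero (by linarith [(abs_lt.mp hG).1]) hUjj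

end Pivots

theorem stmt0_general {n : ℕ} (A L U ΔA : Matrix (Fin n) (Fin n) ℝ)
    (hL : IsUnitLowerTri L) (hU : IsUpperTri U)
    (hUdet : IsUnit U.det)
    (hA : A = L * U)
    (hcond : spec (YL L U) * spec (YU L U) * frob ΔA < 1 / 4) :
    ∃ ΔL ΔU : Matrix (Fin n) (Fin n) ℝ,
      IsStrictLowerTri ΔL ∧ IsUpperTri ΔU ∧
      A + ΔA = (L + ΔL) * (U + ΔU) ∧
      (∀ ΔL' ΔU' : Matrix (Fin n) (Fin n) ℝ,
        IsStrictLowerTri ΔL' → IsUpperTri ΔU' →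
        A + ΔA = (L + ΔL') * (U + ΔU') → ΔL' = ΔL ∧ ΔU' = ΔU) ∧
      frob ΔL ≤ 2 * spec (YL L U) * frob ΔA /
          (1 + Real.sqrt (1 - 4 * spec (YU L U) * spec (YL L U) * frob ΔA)) ∧
      2 * spec (YL L U) * frob ΔA /
          (1 + Real.sqrt (1 - 4 * spec (YU L U) * spec (YL L U) * frob ΔA)) ≤
        2 * spec (YL L U) * frob ΔA := by
  have hU' := hU.isUpperTriangular
  obtain ⟨z, hz, hzr, hzsmall⟩ := exists_eq_sub_lowerPerturbation_mul hL hU' hUdet hcond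
  have hΔL := isStrictLowerTri_lowerPerturbation (U := U) hL.isLowerTriangular z
  have hΔU := isUpperTriangular_upperPerturbation (L := L) hU' z
  have hfact : A + ΔA = (L + lowerPerturbation L U z) * (U + upperPerturbation L U z) :=
    hA ▸ add_eq_mul_of_eq_sub_mul hL.isUnit_det hUdet hz
  refine ⟨_, _, hΔL, fun i j h => hΔU h, hfact, fun ΔL' ΔU' hΔL' hΔU' hfact' => ?_, ?_, ?_⟩
  · obtain ⟨hLeq, hUeq⟩ := lu_factorization_unique (hL.add_strictLower hΔL)
      (hL.add_strictLower hΔL') (hU'.add hΔU) (hU'.add hΔU'.isUpperTriangular)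
      (fun j hj => upperPerturbation_pivot_ne_zero hL hU' hUdet hzsmall hj)
      (hfact.symm.trans hfact')
    exact ⟨(add_left_cancel hLeq).symm, (add_left_cancel hUeq).symm⟩
  · calc frob (lowerPerturbation L U z) ≤ spec (YL L U) * frob z :=
          frob_lowerPerturbation_le hL.isLowerTriangular hU' hUdet z
      _ ≤ spec (YL L U) * _ := mul_le_mul_of_nonneg_left hzr (spec_nonneg _)
      _ = _ := by ring
  · exact div_le_self (mul_nonneg (mul_nonneg zero_le_two (spec_nonneg _)) (frob_nonneg _))
      (le_add_of_nonneg_right (Real.sqrt_nonneg _))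

theorem stmt0 {n : ℕ} (A L U ΔA : Matrix (Fin n) (Fin n) ℝ)
    (hL : IsUnitLowerTri L) (hU : IsUpperTri U)
    (hUdet : IsUnit U.det) (hUsub : IsUnit (lead U).det)
    (hA : A = L * U)
    (hcond : spec (YL L U) * spec (YU L U) * frob ΔA < 1 / 4) :
    ∃ ΔL ΔU : Matrix (Fin n) (Fin n) ℝ,
      IsStrictLowerTri ΔL ∧ IsUpperTri ΔU ∧
      A + ΔA = (L + ΔL) * (U + ΔU) ∧
      (∀ ΔL' ΔU' : Matrix (Fin n) (Fin n) ℝ,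
        IsStrictLowerTri ΔL' → IsUpperTri ΔU' →
        A + ΔA = (L + ΔL') * (U + ΔU') → ΔL' = ΔL ∧ ΔU' = ΔU) ∧
      frob ΔL ≤ 2 * spec (YL L U) * frob ΔA /
          (1 + Real.sqrt (1 - 4 * spec (YU L U) * spec (YL L U) * frob ΔA)) ∧
      2 * spec (YL L U) * frob ΔA /
          (1 + Real.sqrt (1 - 4 * spec (YU L U) * spec (YL L U) * frob ΔA)) ≤
        2 * spec (YL L U) * frob ΔA :=
  stmt0_general A L U ΔA hL hU hUdet hA hcond
end
end

section
/- Let R ∈ ℝ^{n×n} be a nonsingular upper triangular matrix. Then ‖H_R‖₂ ≥ ‖R^{−1}‖₂ / 2, where H_R = M_uvec (R^T ⊗ I_n) M_up (R^{−T} ⊗ R^{−T}). -/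
open Matrix Kronecker

noncomputable section

lemma vnorm_eq {k : Type*} [Fintype k] (v : k → ℝ) :
    ‖(WithLp.equiv 2 (k → ℝ)).symm v‖ = vnorm v := by
  rw [EuclideanSpace.norm_eq]
  simp [vnorm, Real.norm_eq_abs, sq_abs]

lemma spec_mulVec {m k : Type*} [Fintype m] [Fintype k] [DecidableEq k]
    (A : Matrix m k ℝ) (v : k → ℝ) : vnorm (A *ᵥ v) ≤ spec A * vnorm v := by
  have h := (LinearMap.toContinuousLinearMap (Matrix.toEuclideanLin A)).le_opNorm
      ((WithLp.equiv 2 (k → ℝ)).symm v)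
  have hx : (LinearMap.toContinuousLinearMap (Matrix.toEuclideanLin A))
      ((WithLp.equiv 2 (k → ℝ)).symm v) = (WithLp.equiv 2 (m → ℝ)).symm (A *ᵥ v) := rfl
  rw [hx, vnorm_eq, vnorm_eq] at h
  exact h

lemma spec_le {m k : Type*} [Fintype m] [Fintype k] [DecidableEq k]
    (A : Matrix m k ℝ) {C : ℝ} (hC : 0 ≤ C)
    (h : ∀ v, vnorm (A *ᵥ v) ≤ C * vnorm v) : spec A ≤ C := by
  apply ContinuousLinearMap.opNorm_le_bound _ hC
  intro x
  have hx : (LinearMap.toContinuousLinearMap (Matrix.toEuclideanLin A)) x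
      = (WithLp.equiv 2 (m → ℝ)).symm (A *ᵥ (WithLp.equiv 2 (k → ℝ)) x) := rfl
  have hx2 : ‖x‖ = vnorm ((WithLp.equiv 2 (k → ℝ)) x) := by
    rw [← vnorm_eq]; rfl
  rw [hx, vnorm_eq, hx2]
  exact h _

lemma spec_transpose {m k : Type*} [Fintype m] [Fintype k] [DecidableEq m] [DecidableEq k]
    (A : Matrix m k ℝ) : spec Aᵀ = spec A := by
  unfold spec
  have h1 : Aᵀ = Aᴴ := by ext i j; simp [Matrix.conjTranspose_apply]
  rw [h1, Matrix.toEuclideanLin_conjTranspose_eq_adjoint,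
    LinearMap.adjoint_toContinuousLinearMap]
  exact LinearIsometryEquiv.norm_map ContinuousLinearMap.adjoint _

theorem stmt10 {n : ℕ} (R : Matrix (Fin n) (Fin n) ℝ)
    (hR : IsUpperTri R) (hRdet : IsUnit R.det) :
    spec (R⁻¹) / 2 ≤ spec (HR R) := by
  rcases Nat.eq_zero_or_pos n with h0 | hn
  · subst h0
    have h1 : spec (R⁻¹) = 0 := by
      apply ContinuousLinearMap.opNorm_subsingleton
    rw [h1]
    have h2 : 0 ≤ spec (HR R) := norm_nonneg _
    linarith
  · obtain ⟨m, rfl⟩ : ∃ m, n = m + 1 := ⟨n - 1, by omega⟩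
    set l : Fin (m+1) := Fin.last m with hl
    have hInvR : Invertible R := R.invertibleOfIsUnitDet hRdet
    have hbt : R.BlockTriangular id := fun i j h => hR i j h
    have hinvbt := Matrix.blockTriangular_inv_of_blockTriangular hbt
    have hinv : ∀ i j : Fin (m+1), j < i → R⁻¹ i j = 0 := fun i j h => hinvbt h
    have hd : R⁻¹ l l * R l l = 1 := by
      have h2 := congrFun (congrFun (Matrix.nonsing_inv_mul R hRdet) l) l
      rw [Matrix.mul_apply, Finset.sum_eq_single l] at h2
      · simpa using h2
      · intro k _ hk
        rw [hinv l k (lt_of_le_of_ne (Fin.le_last k) hk), zero_mul]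
      · simp
    rw [div_le_iff₀ (by norm_num : (0:ℝ) < 2), ← spec_transpose (R⁻¹)]
    apply spec_le _ (mul_nonneg (norm_nonneg _) (by norm_num))
    intro c
    set y : Fin (m+1) → ℝ := (R⁻¹)ᵀ *ᵥ c with hy
    set X : Fin (m+1) × Fin (m+1) → ℝ := fun p => if p.1 = l then c p.2 else 0 with hX
    have hs1 : (((R⁻¹)ᵀ ⊗ₖ (R⁻¹)ᵀ) *ᵥ X) = fun p : Fin (m+1) × Fin (m+1) =>
        if p.1 = l then R⁻¹ l l * y p.2 else 0 := by
      funext p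
      simp only [Matrix.mulVec, dotProduct, Fintype.sum_prod_type]
      have hsum : ∀ a' : Fin (m+1), (∑ b', ((R⁻¹)ᵀ ⊗ₖ (R⁻¹)ᵀ) p (a', b') * X (a', b'))
          = if a' = l then R⁻¹ l p.1 * y p.2 else 0 := by
        intro a'
        by_cases h : a' = l
        · subst h
          simp only [hX, Matrix.kroneckerMap_apply, Matrix.transpose_apply, if_pos rfl, if_true]
          rw [hy]
          simp only [Matrix.mulVec, dotProduct, Matrix.transpose_apply, Finset.mul_sum]
          exact Finset.sum_congr rfl (fun b' _ => by ring)
        · simp [hX, h]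
      rw [Finset.sum_congr rfl (fun a' _ => hsum a'), Finset.sum_ite_eq' Finset.univ l]
      simp only [Finset.mem_univ, if_true]
      by_cases h : p.1 = l
      · rw [h, if_pos rfl]
      · rw [hinv l p.1 (lt_of_le_of_ne (Fin.le_last _) h), zero_mul, if_neg h]
    have hs2 : (Mup (m+1)) *ᵥ (((R⁻¹)ᵀ ⊗ₖ (R⁻¹)ᵀ) *ᵥ X) = fun p : Fin (m+1) × Fin (m+1) =>
        if p.1 = l then (if p.2 = l then R⁻¹ l l * y p.2 / 2 else R⁻¹ l l * y p.2) else 0 := by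
      funext p
      rw [hs1]
      simp only [Mup, Matrix.diagonal_mulVec_single]
      rw [Matrix.mulVec_diagonal]
      by_cases h : p.1 = l
      · rw [if_pos h]
        by_cases h2 : p.2 = l
        · rw [if_pos h2, if_pos (by rw [h, h2]), if_pos h]
          ring
        · rw [if_neg h2, if_neg (by rw [h]; exact h2), if_pos
            (by rw [h]; exact lt_of_le_of_ne (Fin.le_last _) h2), if_pos h, one_mul]
      · rw [if_neg h, mul_zero, if_neg h]
    have hs3 : ((Rᵀ ⊗ₖ (1 : Matrix (Fin (m+1)) (Fin (m+1)) ℝ)) *ᵥ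
        ((Mup (m+1)) *ᵥ (((R⁻¹)ᵀ ⊗ₖ (R⁻¹)ᵀ) *ᵥ X))) = fun p : Fin (m+1) × Fin (m+1) =>
        if p.1 = l then (if p.2 = l then y p.2 / 2 else y p.2) else 0 := by
      funext p
      rw [hs2]
      simp only [Matrix.mulVec, dotProduct, Fintype.sum_prod_type]
      have hsum : ∀ a' : Fin (m+1), (∑ b', (Rᵀ ⊗ₖ (1 : Matrix (Fin (m+1)) (Fin (m+1)) ℝ)) p (a', b') *
          (if a' = l then (if b' = l then R⁻¹ l l * y b' / 2 else R⁻¹ l l * y b') else 0))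
          = if a' = l then R l p.1 * (if p.2 = l then R⁻¹ l l * y p.2 / 2 else R⁻¹ l l * y p.2) else 0 := by
        intro a'
        by_cases h : a' = l
        · subst h
          simp only [if_pos rfl, if_true, Matrix.kroneckerMap_apply, Matrix.transpose_apply,
            Matrix.one_apply, mul_assoc]
          rw [← Finset.mul_sum]
          congr 1
          rw [Finset.sum_congr rfl (fun b' _ => by
            rw [show (if p.2 = b' then (1:ℝ) else 0) * (if b' = l then R⁻¹ l l * y b' / 2 else R⁻¹ l l * y b')
              = if b' = p.2 then (if b' = l then R⁻¹ l l * y b' / 2 else R⁻¹ l l * y b') else 0 from by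
                by_cases hb : b' = p.2
                · simp [hb]
                · rw [if_neg (fun hh => hb hh.symm), zero_mul, if_neg hb]]),
            Finset.sum_ite_eq' Finset.univ p.2]
          simp
        · simp [h]
      rw [Finset.sum_congr rfl (fun a' _ => hsum a'), Finset.sum_ite_eq' Finset.univ l]
      simp only [Finset.mem_univ, if_true]
      by_cases h : p.1 = l
      · rw [h, if_pos rfl]
        by_cases h2 : p.2 = l
        · rw [if_pos h2, if_pos h2, ← mul_div_assoc, ← mul_assoc, mul_comm (R l l), hd, one_mul]
        · rw [if_neg h2, if_neg h2, ← mul_assoc, mul_comm (R l l), hd, one_mul]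
      · rw [hR l p.1 (lt_of_le_of_ne (Fin.le_last _) h), zero_mul, if_neg h]
    have hs4 : ((HR R) *ᵥ X) = fun q : {p : Fin (m+1) × Fin (m+1) // p.2 ≤ p.1} =>
        if q.1.1 = l then (if q.1.2 = l then y q.1.2 / 2 else y q.1.2) else 0 := by
      funext q
      show ((Muvec (m+1) * (Rᵀ ⊗ₖ (1 : Matrix (Fin (m+1)) (Fin (m+1)) ℝ)) * Mup (m+1) *
        ((R⁻¹)ᵀ ⊗ₖ (R⁻¹)ᵀ)) *ᵥ X) q = _
      rw [← Matrix.mulVec_mulVec, ← Matrix.mulVec_mulVec, ← Matrix.mulVec_mulVec, hs3]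
      simp only [Matrix.mulVec, dotProduct, Muvec, Matrix.of_apply]
      rw [Finset.sum_congr rfl (fun p _ => by
        rw [show (if q.1 = p then (1:ℝ) else 0) * (if p.1 = l then (if p.2 = l then y p.2 / 2 else y p.2) else 0)
          = if p = q.1 then (if p.1 = l then (if p.2 = l then y p.2 / 2 else y p.2) else 0) else 0 from by
            by_cases hp : p = q.1
            · simp [hp]
            · rw [if_neg (fun hh => hp hh.symm), zero_mul, if_neg hp]]),
        Finset.sum_ite_eq' Finset.univ q.1]
      simp
    -- norms
    have hXnorm : vnorm X = vnorm c := by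
      unfold vnorm
      congr 1
      rw [Fintype.sum_prod_type]
      rw [Finset.sum_congr rfl (fun a _ => by
        rw [show (∑ b, X (a, b) ^ 2) = if a = l then ∑ b, c b ^ 2 else 0 from by
          by_cases h : a = l <;> simp [hX, h]]),
        Finset.sum_ite_eq' Finset.univ l]
      simp
    set S : ℝ := ∑ b, y b ^ 2 with hS
    have hylS : y l ^ 2 ≤ S := by
      rw [hS]
      exact Finset.single_le_sum (fun b _ => sq_nonneg (y b)) (Finset.mem_univ l)
    set T : ℝ := ∑ q : {p : Fin (m+1) × Fin (m+1) // p.2 ≤ p.1}, ((HR R) *ᵥ X) q ^ 2 with hT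
    have hTnn : 0 ≤ T := Finset.sum_nonneg (fun q _ => sq_nonneg _)
    have hSleT : S ≤ 4 * T := by
      let emb : Fin (m+1) ↪ {p : Fin (m+1) × Fin (m+1) // p.2 ≤ p.1} :=
        ⟨fun b => ⟨(l, b), Fin.le_last b⟩, fun a b hab => by
          simpa using congrArg (fun q => q.1.2) hab⟩
      have h1 : (∑ b, ((HR R) *ᵥ X) (emb b) ^ 2) ≤ T := by
        rw [hT, ← Finset.sum_map Finset.univ emb (fun q => ((HR R) *ᵥ X) q ^ 2)]
        exact Finset.sum_le_sum_of_subset_of_nonneg (Finset.subset_univ _)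
          (fun q _ _ => sq_nonneg _)
      have h2 : (∑ b, ((HR R) *ᵥ X) (emb b) ^ 2) = S - 3/4 * y l ^ 2 := by
        have key : ∀ b : Fin (m+1), ((HR R) *ᵥ X) (emb b) ^ 2
            = y b ^ 2 - (if b = l then 3/4 * y l ^ 2 else 0) := by
          intro b
          have he : ((HR R) *ᵥ X) (emb b) = if b = l then y b / 2 else y b := by
            rw [hs4]
            show (if l = l then (if b = l then y b / 2 else y b) else 0) = _
            rw [if_pos rfl]
          rw [he]
          by_cases h : b = l
          · subst h; simp; ring
          · simp [h]
        rw [Finset.sum_congr rfl (fun b _ => key b), Finset.sum_sub_distrib,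
          Finset.sum_ite_eq' Finset.univ l, hS]
        simp
      nlinarith
    have hchain := spec_mulVec (HR R) X
    rw [hXnorm] at hchain
    have hyn : vnorm y ≤ 2 * vnorm ((HR R) *ᵥ X) := by
      unfold vnorm
      rw [← hS, ← hT]
      have h4 : Real.sqrt S ≤ Real.sqrt (4 * T) := Real.sqrt_le_sqrt hSleT
      rw [show (4:ℝ) * T = 2 ^ 2 * T by ring, Real.sqrt_mul (by positivity),
        Real.sqrt_sq (by norm_num : (0:ℝ) ≤ 2)] at h4
      exact h4
    have hcnn : 0 ≤ vnorm c := Real.sqrt_nonneg _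
    have hspecnn : 0 ≤ spec (HR R) := norm_nonneg _
    calc vnorm ((R⁻¹)ᵀ *ᵥ c) = vnorm y := rfl
      _ ≤ 2 * vnorm ((HR R) *ᵥ X) := hyn
      _ ≤ 2 * (spec (HR R) * vnorm c) := by nlinarith
      _ = spec (HR R) * 2 * vnorm c := by ring
end
end

section
/- Let A = LU with L ∈ ℝ^{n×n} unit lower triangular and U ∈ ℝ^{n×n} nonsingular upper triangular, and suppose A + ΔA = (L + ΔL)(U + ΔU) with ΔL strictly lower triangular and ΔU upper triangular. Then L^{−1}(ΔL) = slt( L^{−1}(ΔA − (ΔL)(ΔU)) U^{−1} ) and (ΔU) U^{−1} = ut( L^{−1}(ΔA − (ΔL)(ΔU)) U^{−1} ). -/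
open Matrix Kronecker

noncomputable section

theorem stmt14 {n : ℕ} (A ΔA L U ΔL ΔU : Matrix (Fin n) (Fin n) ℝ)
    (hL : IsUnitLowerTri L) (hU : IsUpperTri U) (hUdet : IsUnit U.det)
    (hΔL : IsStrictLowerTri ΔL) (hΔU : IsUpperTri ΔU)
    (hA : A = L * U) (hfac : A + ΔA = (L + ΔL) * (U + ΔU)) :
    L⁻¹ * ΔL = slt (L⁻¹ * (ΔA - ΔL * ΔU) * U⁻¹) ∧
    ΔU * U⁻¹ = ut (L⁻¹ * (ΔA - ΔL * ΔU) * U⁻¹) := by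
  -- L block triangular (lower) and invertible
  have hLbt : L.BlockTriangular OrderDual.toDual := fun i j h => hL.2 _ _ h
  have hUbt : U.BlockTriangular id := fun i j h => hU _ _ h
  have hLdet : IsUnit L.det := by
    rw [Matrix.det_of_lowerTriangular L hLbt]
    simp [hL.1]
  haveI : Invertible L := L.invertibleOfIsUnitDet hLdet
  haveI : Invertible U := U.invertibleOfIsUnitDet hUdet
  have hLinv : L⁻¹.BlockTriangular OrderDual.toDual :=
    Matrix.blockTriangular_inv_of_blockTriangular hLbt
  have hUinv : U⁻¹.BlockTriangular id :=
    Matrix.blockTriangular_inv_of_blockTriangular hUbt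
  -- the key algebraic identity
  have hkey : L⁻¹ * (ΔA - ΔL * ΔU) * U⁻¹ = L⁻¹ * ΔL + ΔU * U⁻¹ := by
    have h1 : ΔA - ΔL * ΔU = ΔL * U + L * ΔU := by
      have h := hfac
      rw [hA, add_mul, mul_add, mul_add] at h
      have h2 : ΔA = L * ΔU + (ΔL * U + ΔL * ΔU) := by
        apply add_left_cancel (a := L * U); rw [h]; abel
      rw [h2]; noncomm_ring
    rw [h1]
    have h3 : L⁻¹ * (ΔL * U + L * ΔU) * U⁻¹ =
        L⁻¹ * ΔL * (U * U⁻¹) + L⁻¹ * L * (ΔU * U⁻¹) := by noncomm_ring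
    rw [h3, Matrix.mul_nonsing_inv U hUdet, Matrix.nonsing_inv_mul L hLdet, mul_one, one_mul]
  rw [hkey]
  -- L⁻¹ * ΔL is strictly lower triangular
  have hX : IsStrictLowerTri (L⁻¹ * ΔL) := by
    intro i j hij
    rw [Matrix.mul_apply]
    apply Finset.sum_eq_zero
    intro k _
    rcases le_or_gt k i with hk | hk
    · rw [hΔL k j (hk.trans hij), mul_zero]
    · rw [hLinv hk, zero_mul]
  -- ΔU * U⁻¹ is upper triangular
  have hY : IsUpperTri (ΔU * U⁻¹) := by
    intro i j hij
    rw [Matrix.mul_apply]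
    apply Finset.sum_eq_zero
    intro k _
    rcases le_or_gt k j with hk | hk
    · rw [hΔU i k (hk.trans_lt hij), zero_mul]
    · rw [hUinv hk, mul_zero]
  constructor
  · ext i j
    simp only [slt, Matrix.of_apply, Matrix.add_apply]
    split_ifs with h
    · rw [hY i j h, add_zero]
    · exact hX i j (not_lt.mp h)
  · ext i j
    simp only [ut, Matrix.of_apply, Matrix.add_apply]
    split_ifs with h
    · rw [hX i j h, zero_add]
    · exact hY i j (not_le.mp h)
end
end

section
/- Let A = QR with Q ∈ ℝ^{m×n} satisfying Q^TQ = I_n and R ∈ ℝ^{n×n} nonsingular upper triangular, and suppose A + ΔA = (Q + ΔQ)(R + ΔR) with (Q + ΔQ)^T(Q + ΔQ) = I_n and ΔR upper triangular. Then (ΔR)R^{−1} = up( Q^T(ΔA)R^{−1} + R^{−T}(ΔA)^TQ ) + up( R^{−T}[(ΔA)^T(ΔA) − (ΔR)^T(ΔR)]R^{−1} ). -/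
open Matrix Kronecker

noncomputable section

lemma up_add' {n : ℕ} (X Y : Matrix (Fin n) (Fin n) ℝ) : up (X + Y) = up X + up Y := by
  ext i j
  simp only [up, Matrix.of_apply, Matrix.add_apply]
  split_ifs <;> ring

lemma up_add_transpose' {n : ℕ} {E : Matrix (Fin n) (Fin n) ℝ} (h : IsUpperTri E) :
    up (E + Eᵀ) = E := by
  ext i j
  simp only [up, Matrix.of_apply, Matrix.add_apply, Matrix.transpose_apply]
  rcases lt_trichotomy i j with hij | hij | hij
  · rw [if_neg hij.ne, if_pos hij.le, h j i hij, add_zero]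
  · subst hij; rw [if_pos rfl]; ring
  · rw [if_neg hij.ne', if_neg (not_le.mpr hij), h i j hij]

theorem stmt15 {m n : ℕ} (A ΔA Q ΔQ : Matrix (Fin m) (Fin n) ℝ)
    (R ΔR : Matrix (Fin n) (Fin n) ℝ)
    (hQ : Qᵀ * Q = 1) (hR : IsUpperTri R) (hRdet : IsUnit R.det)
    (hQ' : (Q + ΔQ)ᵀ * (Q + ΔQ) = 1) (hΔR : IsUpperTri ΔR)
    (hA : A = Q * R) (hfac : A + ΔA = (Q + ΔQ) * (R + ΔR)) :
    ΔR * R⁻¹ =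
      up (Qᵀ * ΔA * R⁻¹ + (R⁻¹)ᵀ * ΔAᵀ * Q) +
        up ((R⁻¹)ᵀ * (ΔAᵀ * ΔA - ΔRᵀ * ΔR) * R⁻¹) := by
  have hRR : R * R⁻¹ = 1 := Matrix.mul_nonsing_inv R hRdet
  have hRTT : (R⁻¹)ᵀ * Rᵀ = 1 := by rw [← Matrix.transpose_mul, hRR, Matrix.transpose_one]
  have hQA : A * R⁻¹ = Q := by rw [hA, Matrix.mul_assoc, hRR, Matrix.mul_one]
  have hQT : Qᵀ = (R⁻¹)ᵀ * Aᵀ := by rw [← hQA, Matrix.transpose_mul]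
  have h1 : Aᵀ * A = Rᵀ * R := by
    rw [hA, Matrix.transpose_mul, Matrix.mul_assoc, ← Matrix.mul_assoc Qᵀ, hQ, Matrix.one_mul]
  have h2 : (A + ΔA)ᵀ * (A + ΔA) = (R + ΔR)ᵀ * (R + ΔR) := by
    rw [hfac, Matrix.transpose_mul, Matrix.mul_assoc, ← Matrix.mul_assoc (Q + ΔQ)ᵀ, hQ',
      Matrix.one_mul]
  have h3 : Aᵀ * ΔA + ΔAᵀ * A + ΔAᵀ * ΔA = Rᵀ * ΔR + ΔRᵀ * R + ΔRᵀ * ΔR := by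
    have e1 : (A + ΔA)ᵀ * (A + ΔA) = Aᵀ * A + (Aᵀ * ΔA + ΔAᵀ * A + ΔAᵀ * ΔA) := by
      simp only [Matrix.transpose_add, Matrix.add_mul, Matrix.mul_add]; abel
    have e2 : (R + ΔR)ᵀ * (R + ΔR) = Rᵀ * R + (Rᵀ * ΔR + ΔRᵀ * R + ΔRᵀ * ΔR) := by
      simp only [Matrix.transpose_add, Matrix.add_mul, Matrix.mul_add]; abel
    have := h2
    rw [e1, e2, h1] at this
    exact add_left_cancel this
  have key : Qᵀ * ΔA * R⁻¹ + (R⁻¹)ᵀ * ΔAᵀ * Q +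
      (R⁻¹)ᵀ * (ΔAᵀ * ΔA - ΔRᵀ * ΔR) * R⁻¹ = ΔR * R⁻¹ + (ΔR * R⁻¹)ᵀ := by
    calc Qᵀ * ΔA * R⁻¹ + (R⁻¹)ᵀ * ΔAᵀ * Q + (R⁻¹)ᵀ * (ΔAᵀ * ΔA - ΔRᵀ * ΔR) * R⁻¹
        = (R⁻¹)ᵀ * (Aᵀ * ΔA + ΔAᵀ * A + ΔAᵀ * ΔA - ΔRᵀ * ΔR) * R⁻¹ := by
          rw [hQT, ← hQA]
          simp only [Matrix.sub_mul, Matrix.mul_sub, Matrix.add_mul, Matrix.mul_add, Matrix.mul_assoc]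
          abel
      _ = (R⁻¹)ᵀ * (Rᵀ * ΔR + ΔRᵀ * R + ΔRᵀ * ΔR - ΔRᵀ * ΔR) * R⁻¹ := by rw [h3]
      _ = (R⁻¹)ᵀ * Rᵀ * (ΔR * R⁻¹) + (R⁻¹)ᵀ * ΔRᵀ * (R * R⁻¹) := by
          simp only [Matrix.sub_mul, Matrix.mul_sub, Matrix.add_mul, Matrix.mul_add, Matrix.mul_assoc]
          abel
      _ = ΔR * R⁻¹ + (ΔR * R⁻¹)ᵀ := by
          rw [hRTT, hRR, Matrix.one_mul, Matrix.mul_one, Matrix.transpose_mul]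
  have : Invertible R := R.invertibleOfIsUnitDet hRdet
  have hRinvTri : IsUpperTri (R⁻¹) :=
    Matrix.blockTriangular_inv_of_blockTriangular (b := id) (fun i j h => hR i j h)
  have hE : IsUpperTri (ΔR * R⁻¹) :=
    Matrix.BlockTriangular.mul (b := id) (fun i j h => hΔR i j h) hRinvTri
  rw [← up_add', key, up_add_transpose' hE]
end
end
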